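/- arXiv:1711.07734 — 2 statements merged into one kernel-verified Lean document; each statement's English description precedes it below -/
import Mathlib

section
/- Let G be a 2P₇-free graph and let x₁x₂…x₁₃ be a path in G on 13 distinct vertices. If y is a vertex outside {x₁,…,x₁₃} that has a neighbor outside {x₁,…,x₁₃}, then the neighbors of y on the path all lie in {x₃, x₄, x₇, x₁₀, x₁₁}; in particular y is adjacent to at most 3 vertices of the path. -/
open SimpleGraph

/-- `H` is contained in `G` as a subgraph, i.e. there is an injective graph
homomorphism from `H` to `G` (a copy of `H` in `G`). -/
def Contains {α β : Type*} (H : SimpleGraph α) (G : SimpleGraph β) : Prop :=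
  ∃ f : H →g G, Function.Injective f

/-- `2P₇`: the disjoint union of two copies of the path on 7 vertices. -/
def TwoP7 : SimpleGraph (Fin 7 ⊕ Fin 7) :=
  SimpleGraph.pathGraph 7 ⊕g SimpleGraph.pathGraph 7

/-!
If `y` has a neighbour `z` off the path, every edge from `y` to the path can be used to reroute
the path `x₁ … x₁₃` through `y` and `z`, and for most attachment points this yields two disjoint
paths on 7 vertices: for `y ~ x₁` take `z y x₁ x₂ x₃ x₄ x₅` and `x₆ … x₁₂`,
for `y ~ x₈` take `x₁ … x₇` and `z y x₈ … x₁₂`, and so on. Only `x₃, x₄, x₇, x₁₀, x₁₁` survive.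
Among these, `y` cannot see both `x₃` and `x₄` (`x₁ x₂ x₃ y x₄ x₅ x₆` and `x₇ … x₁₃`), both `x₃`
and `x₁₁` (`x₁ x₂ x₃ y x₁₁ x₁₂ x₁₃` and `x₄ … x₁₀`), or both `x₁₀` and `x₁₁`, which leaves room
for at most three neighbours. In the code the path is indexed from 0.
-/

open Function Finset

theorem Contains.trans {α β γ : Type*} {H : SimpleGraph α} {K : SimpleGraph β}
    {G : SimpleGraph γ} (hHK : Contains H K) (hKG : Contains K G) : Contains H G :=
  let ⟨f, hf⟩ := hHK
  let ⟨g, hg⟩ := hKG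
  ⟨g.comp f, hg.comp hf⟩

namespace SimpleGraph

variable {V : Type*} {G : SimpleGraph V}

theorem adj_of_val_add_one_eq {n : ℕ} {x : Fin (n + 1) → V}
    (hx : ∀ i : Fin n, G.Adj (x i.castSucc) (x i.succ)) {a b : Fin (n + 1)}
    (hab : (a : ℕ) + 1 = b) : G.Adj (x a) (x b) := by
  have hb : b = (⟨a, by omega⟩ : Fin n).succ := Fin.ext hab.symm
  rw [hb]
  exact hx ⟨a, by omega⟩

theorem adj_of_pathGraph_adj {n : ℕ} {x : Fin (n + 1) → V}
    (hx : ∀ i : Fin n, G.Adj (x i.castSucc) (x i.succ)) {a b : Fin (n + 1)}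
    (hab : (pathGraph (n + 1)).Adj a b) : G.Adj (x a) (x b) := by
  rcases pathGraph_adj.mp hab with h | h
  · exact adj_of_val_add_one_eq hx h
  · exact (adj_of_val_add_one_eq hx h).symm

theorem contains_pathGraph_sum_pathGraph {m n : ℕ} (p : Fin (m + 1) → V) (q : Fin (n + 1) → V)
    (hpq : Injective (Sum.elim p q)) (hp : ∀ i : Fin m, G.Adj (p i.castSucc) (p i.succ))
    (hq : ∀ i : Fin n, G.Adj (q i.castSucc) (q i.succ)) :
    Contains (pathGraph (m + 1) ⊕g pathGraph (n + 1)) G := by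
  refine ⟨⟨Sum.elim p q, fun {u v} huv => ?_⟩, hpq⟩
  rcases u with u | u <;> rcases v with v | v
  · exact adj_of_pathGraph_adj hp (sum_adj_inl.mp huv)
  · exact absurd huv (not_adj_sum_inl_inr _ _)
  · exact absurd huv.symm (not_adj_sum_inl_inr _ _)
  · exact adj_of_pathGraph_adj hq (sum_adj_inr.mp huv)

/-- `inl a` is the path vertex `a`, `inr 0` an outside vertex `y` adjacent to the path vertices in
`A`, and `inr 1` a further outside neighbour of `y`. -/
def PendantRel {n : ℕ} (A : Finset (Fin n)) : Fin n ⊕ Fin 2 → Fin n ⊕ Fin 2 → Prop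
  | .inl a, .inl b => (a : ℕ) + 1 = b
  | .inr j, .inl a => j = 0 ∧ a ∈ A
  | .inr j, .inr k => j = 0 ∧ k = 1
  | .inl _, .inr _ => False

instance {n : ℕ} (A : Finset (Fin n)) : DecidableRel (PendantRel A) := fun u v => by
  cases u <;> cases v <;> unfold PendantRel <;> infer_instance

def pathWithPendant (n : ℕ) (A : Finset (Fin n)) : SimpleGraph (Fin n ⊕ Fin 2) :=
  fromRel (PendantRel A)

instance {n : ℕ} (A : Finset (Fin n)) : DecidableRel (pathWithPendant n A).Adj :=
  inferInstanceAs (DecidableRel (fromRel (PendantRel A)).Adj)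

theorem contains_pathWithPendant {n : ℕ} {x : Fin (n + 1) → V} (hinj : Injective x)
    (hx : ∀ i : Fin n, G.Adj (x i.castSucc) (x i.succ)) {y z : V} (hy : y ∉ Set.range x)
    (hz : z ∉ Set.range x) (hyz : G.Adj y z) {A : Finset (Fin (n + 1))}
    (hA : ∀ a ∈ A, G.Adj y (x a)) : Contains (pathWithPendant (n + 1) A) G := by
  set w : Fin (n + 1) ⊕ Fin 2 → V := Sum.elim x ![y, z]
  have hrel : ∀ u v, PendantRel A u v → G.Adj (w u) (w v) := by
    rintro (a | j) (b | k) h <;> simp only [PendantRel] at h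
    · exact adj_of_val_add_one_eq hx h
    · obtain ⟨rfl, hb⟩ := h
      exact hA b hb
    · obtain ⟨rfl, rfl⟩ := h
      exact hyz
  refine ⟨⟨w, fun {u v} huv => ?_⟩, hinj.sumElim ?_ ?_⟩
  · rcases ((fromRel_adj _ u v).mp huv).2 with h | h
    · exact hrel u v h
    · exact (hrel v u h).symm
  · intro j k hjk
    fin_cases j <;> fin_cases k <;> simp_all [hyz.ne, hyz.ne.symm]
  · intro a j
    fin_cases j
    · exact fun h => hy ⟨a, h⟩
    · exact fun h => hz ⟨a, h⟩

end SimpleGraph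

theorem contains_twoP7_pathWithPendant_singleton {i : Fin 13}
    (hi : (i : ℕ) ∉ ({2, 3, 6, 9, 10} : Set ℕ)) : Contains TwoP7 (pathWithPendant 13 {i}) := by
  fin_cases i
  · exact contains_pathGraph_sum_pathGraph
      ![.inl 4, .inl 3, .inl 2, .inl 1, .inl 0, .inr 0, .inr 1]
      ![.inl 5, .inl 6, .inl 7, .inl 8, .inl 9, .inl 10, .inl 11]
      (by decide) (by decide) (by decide)
  · exact contains_pathGraph_sum_pathGraph
      ![.inl 5, .inl 4, .inl 3, .inl 2, .inl 1, .inr 0, .inr 1]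
      ![.inl 6, .inl 7, .inl 8, .inl 9, .inl 10, .inl 11, .inl 12]
      (by decide) (by decide) (by decide)
  · simp at hi
  · simp at hi
  · exact contains_pathGraph_sum_pathGraph
      ![.inl 0, .inl 1, .inl 2, .inl 3, .inl 4, .inr 0, .inr 1]
      ![.inl 5, .inl 6, .inl 7, .inl 8, .inl 9, .inl 10, .inl 11]
      (by decide) (by decide) (by decide)
  · exact contains_pathGraph_sum_pathGraph
      ![.inl 0, .inl 1, .inl 2, .inl 3, .inl 4, .inl 5, .inr 0]
      ![.inl 6, .inl 7, .inl 8, .inl 9, .inl 10, .inl 11, .inl 12]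
      (by decide) (by decide) (by decide)
  · simp at hi
  · exact contains_pathGraph_sum_pathGraph
      ![.inl 0, .inl 1, .inl 2, .inl 3, .inl 4, .inl 5, .inl 6]
      ![.inr 1, .inr 0, .inl 7, .inl 8, .inl 9, .inl 10, .inl 11]
      (by decide) (by decide) (by decide)
  · exact contains_pathGraph_sum_pathGraph
      ![.inl 0, .inl 1, .inl 2, .inl 3, .inl 4, .inl 5, .inl 6]
      ![.inr 1, .inr 0, .inl 8, .inl 9, .inl 10, .inl 11, .inl 12]
      (by decide) (by decide) (by decide)
  · simp at hi
  · simp at hi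
  · exact contains_pathGraph_sum_pathGraph
      ![.inl 0, .inl 1, .inl 2, .inl 3, .inl 4, .inl 5, .inl 6]
      ![.inr 1, .inr 0, .inl 11, .inl 10, .inl 9, .inl 8, .inl 7]
      (by decide) (by decide) (by decide)
  · exact contains_pathGraph_sum_pathGraph
      ![.inl 0, .inl 1, .inl 2, .inl 3, .inl 4, .inl 5, .inl 6]
      ![.inr 1, .inr 0, .inl 12, .inl 11, .inl 10, .inl 9, .inl 8]
      (by decide) (by decide) (by decide)

theorem contains_twoP7_pathWithPendant_pair {A : Finset (Fin 13)}
    (hA : A = {2, 3} ∨ A = {2, 10} ∨ A = {9, 10}) : Contains TwoP7 (pathWithPendant 13 A) := by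
  rcases hA with rfl | rfl | rfl
  · exact contains_pathGraph_sum_pathGraph
      ![.inl 0, .inl 1, .inl 2, .inr 0, .inl 3, .inl 4, .inl 5]
      ![.inl 6, .inl 7, .inl 8, .inl 9, .inl 10, .inl 11, .inl 12]
      (by decide) (by decide) (by decide)
  · exact contains_pathGraph_sum_pathGraph
      ![.inl 0, .inl 1, .inl 2, .inr 0, .inl 10, .inl 11, .inl 12]
      ![.inl 3, .inl 4, .inl 5, .inl 6, .inl 7, .inl 8, .inl 9]
      (by decide) (by decide) (by decide)
  · exact contains_pathGraph_sum_pathGraph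
      ![.inl 0, .inl 1, .inl 2, .inl 3, .inl 4, .inl 5, .inl 6]
      ![.inl 7, .inl 8, .inl 9, .inr 0, .inl 10, .inl 11, .inl 12]
      (by decide) (by decide) (by decide)

theorem card_le_three_of_avoids_pairs {N : Finset (Fin 13)} (hN : N ⊆ {2, 3, 6, 9, 10})
    (h23 : ¬ {2, 3} ⊆ N) (h2_10 : ¬ {2, 10} ⊆ N) (h9_10 : ¬ {9, 10} ⊆ N) : #N ≤ 3 := by
  simp only [insert_subset_iff, singleton_subset_iff, not_and] at h23 h2_10 h9_10
  obtain hsub | hsub | hsub : N ⊆ {2, 6, 9} ∨ N ⊆ {3, 6, 10} ∨ N ⊆ {3, 6, 9} := by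
    simp only [subset_iff, mem_insert, mem_singleton] at hN ⊢
    grind
  all_goals exact (card_le_card hsub).trans card_le_three

/-- In a `2P₇`-free graph with a path `x₁x₂…x₁₃` on 13 distinct vertices, if a
vertex `y` outside the path has a neighbour outside the path, then all neighbours
of `y` on the path lie in `{x₃, x₄, x₇, x₁₀, x₁₁}` (0-based indices `{2,3,6,9,10}`);
in particular `y` has at most 3 neighbours on the path. -/
theorem stmt8 {V : Type*} (G : SimpleGraph V) (hfree : ¬ Contains TwoP7 G)
    (x : Fin 13 → V) (hinj : Function.Injective x)
    (hpath : ∀ i : Fin 12, G.Adj (x i.castSucc) (x i.succ)) :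
    ∀ y, y ∉ Set.range x → (∃ z, z ∉ Set.range x ∧ G.Adj y z) →
      (∀ i : Fin 13, G.Adj y (x i) → (i : ℕ) ∈ ({2, 3, 6, 9, 10} : Set ℕ)) ∧
      ({v : V | v ∈ Set.range x ∧ G.Adj y v}).ncard ≤ 3 := by
  rintro y hy ⟨z, hz, hyz⟩
  have hno_copy : ∀ A : Finset (Fin 13), (∀ a ∈ A, G.Adj y (x a)) →
      ¬ Contains TwoP7 (pathWithPendant 13 A) := fun A hA h =>
    hfree (h.trans (contains_pathWithPendant hinj hpath hy hz hyz hA))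
  have hgood : ∀ i : Fin 13, G.Adj y (x i) → (i : ℕ) ∈ ({2, 3, 6, 9, 10} : Set ℕ) :=
    fun i hi => by_contra fun hbad =>
      hno_copy {i} (by simpa using hi) (contains_twoP7_pathWithPendant_singleton hbad)
  refine ⟨hgood, ?_⟩
  classical
  set N := univ.filter fun i => G.Adj y (x i)
  have hpair : ∀ A : Finset (Fin 13), (A = {2, 3} ∨ A = {2, 10} ∨ A = {9, 10}) → ¬ A ⊆ N :=
    fun A hA hAN => hno_copy A (fun a ha => (mem_filter.mp (hAN ha)).2)
      (contains_twoP7_pathWithPendant_pair hA)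
  have hN : {v | v ∈ Set.range x ∧ G.Adj y v} = x '' N := by
    ext v
    simp only [Set.mem_ofPred_eq, Set.mem_range, Set.mem_image]
    grind
  rw [hN, Set.ncard_image_of_injective _ hinj, Set.ncard_coe_finset]
  refine card_le_three_of_avoids_pairs (fun i hi => ?_) (hpair _ (.inl rfl))
    (hpair _ (.inr (.inl rfl))) (hpair _ (.inr (.inr rfl)))
  have := hgood i (mem_filter.mp hi).2
  simp only [Set.mem_insert_iff, Set.mem_singleton_iff, mem_insert, mem_singleton, Fin.ext_iff,
    Fin.coe_ofNat_eq_mod, Nat.reduceMod] at this ⊢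
  omega
end

section
/- Let G be a 2P₇-free graph and let x₁x₂…x₁₃ be a path in G on 13 distinct vertices. Suppose some vertex outside {x₁,…,x₁₃} is adjacent to x_i with 6 ≤ i ≤ 12. Then for every j with 1 ≤ j ≤ i − 2, it is not the case that both x₁₃x_j and x_{i+1}x_{j+1} are edges of G. -/
/-!
Let `y` be the outside neighbour of `x_i`. The path `x₁ … x₁₃`, the chords `x₁₃x_j` and
`x_{i+1}x_{j+1}` and the edge `y x_i` form a graph on 14 vertices which contains two disjoint
paths on 7 vertices, so it cannot sit inside a `2P₇`-free graph. The two paths are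
* if `j + 6 ≤ i`: `x₁ … x_j x₁₃ x₁₂ … x_{i+1} x_{j+1} x_{j+2} …` and `y x_i x_{i-1} … x_{i-5}`;
* if `i ≤ j + 5` and `j ≤ 7`: `x₁ … x_j x₁₃ x₁₂ …` and `y x_i … x_{j+1} x_{i+1} x_{i+2} …`;
* if `8 ≤ j`: `x₁ … x₇` and `y x_i … x_{j+1} x_{i+1} … x₁₃ x_j x_{j-1} …`.
-/

open SimpleGraph

namespace SimpleGraph

variable {U V W : Type*} {G : SimpleGraph U} {H : SimpleGraph V} {K : SimpleGraph W}

def Hom.sumElim (f : G →g K) (g : H →g K) : G ⊕g H →g K where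
  toFun := Sum.elim f g
  map_rel' := by rintro (u | u) (v | v) h <;> simp_all [f.map_adj, g.map_adj]

def Hom.ofPathGraph {n : ℕ} (p : Fin (n + 1) → U)
    (hp : ∀ k : Fin n, G.Adj (p k.castSucc) (p k.succ)) : pathGraph (n + 1) →g G where
  toFun := p
  map_rel' := by
    intro u v huv
    rcases pathGraph_adj.mp huv with h | h
    · have := hp ⟨u, by omega⟩
      rwa [show (⟨u, _⟩ : Fin n).castSucc = u from Fin.ext rfl,
        show (⟨u, _⟩ : Fin n).succ = v from Fin.ext h] at this
    · have := hp ⟨v, by omega⟩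
      rw [show (⟨v, _⟩ : Fin n).castSucc = v from Fin.ext rfl,
        show (⟨v, _⟩ : Fin n).succ = u from Fin.ext h] at this
      exact this.symm

end SimpleGraph

theorem Contains.trans_s18 {α β γ : Type*} {A : SimpleGraph α} {B : SimpleGraph β}
    {C : SimpleGraph γ} : Contains A B → Contains B C → Contains A C
  | ⟨f, hf⟩, ⟨g, hg⟩ => ⟨g.comp f, hg.comp hf⟩

theorem contains_twoP7_of_paths {V : Type*} {G : SimpleGraph V} (p q : Fin 7 → V)
    (hp : ∀ k : Fin 6, G.Adj (p k.castSucc) (p k.succ))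
    (hq : ∀ k : Fin 6, G.Adj (q k.castSucc) (q k.succ))
    (hpq : Function.Injective (Sum.elim p q)) : Contains TwoP7 G :=
  ⟨(Hom.ofPathGraph p hp).sumElim (Hom.ofPathGraph q hq), hpq⟩

/-- Vertex `k < 13` is `x_{k+1}` and vertex `13` is `y`: the edges are those of the path, the
chords `x₁₃x_j`, `x_{i+1}x_{j+1}` and the pendant edge `x_i y`. -/
def ChordedPathRel (i j s t : ℕ) : Prop :=
  (t = s + 1 ∧ t ≤ 12) ∨ (s = 12 ∧ t = j - 1) ∨ (s = i ∧ t = j) ∨ (s = i - 1 ∧ t = 13)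

def chordedPath (i j : ℕ) : SimpleGraph (Fin 14) :=
  SimpleGraph.fromRel fun s t => ChordedPathRel i j s t

theorem contains_chordedPath {V : Type*} {G : SimpleGraph V} {x : Fin 13 → V}
    (hinj : Function.Injective x) (hpath : ∀ k : Fin 12, G.Adj (x k.castSucc) (x k.succ))
    {y : V} (hy : y ∉ Set.range x) {i j : ℕ} (hi : i ≤ 12) (hj : 1 ≤ j) (hji : j < i)
    (hyx : G.Adj y (x ⟨i - 1, by omega⟩)) (h12 : G.Adj (x 12) (x ⟨j - 1, by omega⟩))
    (hij : G.Adj (x ⟨i, by omega⟩) (x ⟨j, by omega⟩)) :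
    Contains (chordedPath i j) G := by
  set z : Fin 14 → V := Fin.snoc x y
  have hz : ∀ (k : ℕ) (hk : k < 13), z ⟨k, by omega⟩ = x ⟨k, hk⟩ :=
    fun k hk => Fin.snoc_castSucc (i := ⟨k, hk⟩) ..
  have hz13 : z 13 = y := Fin.snoc_last ..
  have hrel : ∀ (s t : ℕ) (hs : s < 14) (ht : t < 14),
      ChordedPathRel i j s t → G.Adj (z ⟨s, hs⟩) (z ⟨t, ht⟩) := by
    rintro s t hs ht (⟨rfl, ht'⟩ | ⟨rfl, rfl⟩ | ⟨rfl, rfl⟩ | ⟨rfl, rfl⟩)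
    · rw [hz _ (by omega), hz _ (by omega)]
      exact hpath ⟨s, by omega⟩
    · rw [hz _ (by omega), hz _ (by omega)]
      exact h12
    · rw [hz _ (by omega), hz _ (by omega)]
      exact hij
    · rw [hz _ (by omega)]
      exact hz13 ▸ hyx.symm
  refine ⟨⟨z, ?_⟩, Fin.snoc_injective_of_injective hinj hy⟩
  rintro ⟨s, hs⟩ ⟨t, ht⟩ ⟨-, hst | hts⟩
  exacts [hrel s t hs ht hst, (hrel t s ht hs hts).symm]

theorem contains_twoP7_chordedPath_of_indices {i j : ℕ} (f g : ℕ → ℕ)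
    (hf : ∀ k < 7, f k < 14) (hg : ∀ k < 7, g k < 14)
    (hf_inj : ∀ a < 7, ∀ b < 7, f a = f b → a = b)
    (hg_inj : ∀ a < 7, ∀ b < 7, g a = g b → a = b)
    (hfg : ∀ a < 7, ∀ b < 7, f a ≠ g b)
    (hf_adj : ∀ k < 6,
      ChordedPathRel i j (f k) (f (k + 1)) ∨ ChordedPathRel i j (f (k + 1)) (f k))
    (hg_adj : ∀ k < 6,
      ChordedPathRel i j (g k) (g (k + 1)) ∨ ChordedPathRel i j (g (k + 1)) (g k)) :
    Contains TwoP7 (chordedPath i j) := by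
  refine contains_twoP7_of_paths (fun k => ⟨f k, hf k k.isLt⟩) (fun k => ⟨g k, hg k k.isLt⟩)
    ?_ ?_ ?_
  · intro k
    refine ⟨fun h => ?_, hf_adj k k.isLt⟩
    have := hf_inj k (by omega) (k + 1) (by omega) (Fin.mk.inj h)
    omega
  · intro k
    refine ⟨fun h => ?_, hg_adj k k.isLt⟩
    have := hg_inj k (by omega) (k + 1) (by omega) (Fin.mk.inj h)
    omega
  · rintro (a | a) (b | b) hab <;> simp only [Sum.elim_inl, Sum.elim_inr, Fin.mk.injEq] at hab
    · exact congrArg Sum.inl (Fin.ext (hf_inj a a.isLt b b.isLt hab))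
    · exact absurd hab (hfg a a.isLt b b.isLt)
    · exact absurd hab.symm (hfg b b.isLt a a.isLt)
    · exact congrArg Sum.inr (Fin.ext (hg_inj a a.isLt b b.isLt hab))

theorem contains_twoP7_chordedPath_of_add_six_le {i j : ℕ} (hi : i ≤ 12) (hj : 1 ≤ j)
    (hji : j + 6 ≤ i) : Contains TwoP7 (chordedPath i j) := by
  refine contains_twoP7_chordedPath_of_indices
    (fun k => if k < j then k else if k < j + 13 - i then 12 - (k - j) else k - (13 - i))
    (fun k => if k = 0 then 13 else i - k) ?_ ?_ ?_ ?_ ?_ ?_ ?_ <;> grind [ChordedPathRel]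

theorem contains_twoP7_chordedPath_of_le_add_five {i j : ℕ} (hi : 6 ≤ i) (hji : j ≤ i - 2)
    (hij : i ≤ j + 5) (hj : j ≤ 7) : Contains TwoP7 (chordedPath i j) := by
  refine contains_twoP7_chordedPath_of_indices
    (fun k => if k < j then k else 12 + j - k)
    (fun k => if k = 0 then 13 else if k ≤ i - j then i - k else j + k - 1)
    ?_ ?_ ?_ ?_ ?_ ?_ ?_ <;> grind [ChordedPathRel]

theorem contains_twoP7_chordedPath_of_eight_le {i j : ℕ} (hi : i ≤ 12) (hji : j ≤ i - 2)
    (hj : 8 ≤ j) : Contains TwoP7 (chordedPath i j) := by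
  refine contains_twoP7_chordedPath_of_indices (fun k => k)
    (fun k => if k = 0 then 13 else if k ≤ i - j then i - k
      else if k ≤ 13 - j then j + k - 1 else 13 - k)
    ?_ ?_ ?_ ?_ ?_ ?_ ?_ <;> grind [ChordedPathRel]

theorem contains_twoP7_chordedPath {i j : ℕ} (hi₁ : 6 ≤ i) (hi₂ : i ≤ 12) (hj₁ : 1 ≤ j)
    (hj₂ : j ≤ i - 2) : Contains TwoP7 (chordedPath i j) := by
  rcases (by omega : j + 6 ≤ i ∨ (i ≤ j + 5 ∧ j ≤ 7) ∨ 8 ≤ j) with h | ⟨h, h'⟩ | h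
  · exact contains_twoP7_chordedPath_of_add_six_le hi₂ hj₁ h
  · exact contains_twoP7_chordedPath_of_le_add_five hi₁ hj₂ h h'
  · exact contains_twoP7_chordedPath_of_eight_le hi₂ hj₂ h

/-- If some vertex outside the 13-vertex path `x₁x₂…x₁₃` of a `2P₇`-free graph is
adjacent to `x_i` with `6 ≤ i ≤ 12` (1-based), then for every `j` with
`1 ≤ j ≤ i - 2`, not both `x₁₃x_j` and `x_{i+1}x_{j+1}` are edges.
(The function `x` is 0-based: `x ⟨i-1, _⟩` is the paper's `x_i`.) -/
theorem stmt18 {V : Type*} (G : SimpleGraph V) (hfree : ¬ Contains TwoP7 G)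
    (x : Fin 13 → V) (hinj : Function.Injective x)
    (hpath : ∀ i : Fin 12, G.Adj (x i.castSucc) (x i.succ))
    (i : ℕ) (hi₁ : 6 ≤ i) (hi₂ : i ≤ 12)
    (hhit : ∃ y, y ∉ Set.range x ∧ G.Adj y (x ⟨i - 1, by omega⟩))
    (j : ℕ) (hj₁ : 1 ≤ j) (hj₂ : j ≤ i - 2) :
    ¬ (G.Adj (x 12) (x ⟨j - 1, by omega⟩) ∧ G.Adj (x ⟨i, by omega⟩) (x ⟨j, by omega⟩)) := by
  rintro ⟨h12, hij⟩
  obtain ⟨y, hy, hyx⟩ := hhit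
  exact hfree <| (contains_twoP7_chordedPath hi₁ hi₂ hj₁ hj₂).trans_s18 <|
    contains_chordedPath hinj hpath hy hi₂ hj₁ (by omega) hyx h12 hij
end
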